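/- arXiv:2207.11618 — 4 statements merged into one kernel-verified Lean document; each statement's English description precedes it below -/
import Mathlib

section
/- Let φ : ℝⁿ × ℝⁿ → ℝⁿ be twice continuously differentiable, set f(x) = φ(x,x), let x ∈ ℝⁿ, and let u : ℝ → ℝⁿ solve u̇(t) = f(u(t)) with u(0) = x on a neighborhood of 0. Let F : ℝ × ℝⁿ → ℝⁿ satisfy the scheme identity F(h,x) − x = (h/2)·(φ(F(h,x), x) + φ(x, F(h,x))) for all h in a neighborhood of 0, and assume h ↦ F(h,x) is differentiable at h = 0 with F(0,x) = x and (∂F/∂h)(0,x) = f(x). Then the local truncation error E(h) = u(h) − F(h,x) satisfies E(h) = O(h³) as h → 0; that is, h ↦ u(h) − F(h,x) is big-O of h ↦ h³ near 0. Hence the NSFD scheme is of second order. -/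
/-!
The exact solution and the scheme both agree with `x + h f(x) + (h²/2) f'(x) f(x)` up to `O(h³)`.
Each is obtained by a bootstrap through the quadratic Taylor bound
`Ψ (G h) - Ψ x - h Ψ'(x) c = O(h²)`, valid whenever `G h = x + h c + O(h²)`.
For the solution, `u' = f ∘ u` is integrated twice: first with `f (u t) - f x = O(t)`, then with
the Taylor bound for `f`.
For the scheme, `Ψ y = φ(y, x) + φ(x, y)` gives `F h - x = (h/2) Ψ(F h)` and `Ψ x = 2 f(x)`, so
`F h - x - h f(x) = (h/2)(Ψ(F h) - Ψ x)`, and the Taylor bound for `Ψ` is applied once.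
The two quadratic coefficients coincide because `Ψ'(x)` and `f'(x)` are both `v ↦ Dφ(x,x)(v,v)`.
-/

open Asymptotics Filter Topology

variable {E F : Type*} [NormedAddCommGroup E] [NormedSpace ℝ E]
  [NormedAddCommGroup F] [NormedSpace ℝ F]

theorem isBigO_pow_succ_of_hasDerivAt {w w' : ℝ → E} {k : ℕ} (h0 : w 0 = 0)
    (hd : ∀ᶠ t in 𝓝 0, HasDerivAt w (w' t) t) (hO : w' =O[𝓝 0] (· ^ k)) :
    w =O[𝓝 0] (· ^ (k + 1)) := by
  obtain ⟨C, hC0, hC⟩ := hO.exists_nonneg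
  obtain ⟨ε, hε, hball⟩ := Metric.eventually_nhds_iff_ball.1 (hd.and hC.bound)
  refine .of_bound C (Metric.eventually_nhds_iff_ball.2 ⟨ε, hε, fun h hh => ?_⟩)
  have hle : ∀ t ∈ Set.uIcc 0 h, |t| ≤ |h| := fun t ht => by
    simpa using Set.abs_sub_left_of_mem_uIcc ht
  have hmem : ∀ t ∈ Set.uIcc 0 h, t ∈ Metric.ball (0 : ℝ) ε := fun t ht => by
    rw [mem_ball_zero_iff] at hh ⊢
    exact (hle t ht).trans_lt hh
  have := (convex_uIcc 0 h).norm_image_sub_le_of_norm_hasDerivWithin_le (C := C * |h| ^ k)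
    (fun t ht => (hball t (hmem t ht)).1.hasDerivWithinAt)
    (fun t ht => (hball t (hmem t ht)).2.trans (by rw [norm_pow]; gcongr; exact hle t ht))
    Set.left_mem_uIcc Set.right_mem_uIcc
  simpa [h0, pow_succ, mul_assoc] using this

theorem Asymptotics.IsBigO.div_two_smul {v : ℝ → E} {k : ℕ} (hv : v =O[𝓝 0] (· ^ k)) :
    (fun h => (h / 2) • v h) =O[𝓝 0] (· ^ (k + 1)) := by
  have hhalf : (fun h : ℝ => h / 2) =O[𝓝 0] fun h => h :=
    (isBigO_refl (fun h : ℝ => h) _).const_mul_left (1 / 2) |>.congr_left fun h => by ring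
  simpa [pow_succ, mul_comm] using hhalf.smul hv

theorem ContDiffAt.isBigO_sub_sub_fderiv {Ψ : E → F} {x : E} (hΨ : ContDiffAt ℝ 2 Ψ x) :
    (fun y => Ψ y - Ψ x - fderiv ℝ Ψ x (y - x)) =O[𝓝 x] fun y => ‖y - x‖ ^ 2 := by
  obtain ⟨K, s, hs, hK⟩ := (hΨ.fderiv_right (m := 1) le_rfl).exists_lipschitzOnWith
  have hdiff : ∀ᶠ y in 𝓝 x, DifferentiableAt ℝ Ψ y :=
    (hΨ.eventually (by simp)).mono fun y hy => hy.differentiableAt (by simp)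
  obtain ⟨ε, hε, hball⟩ := Metric.mem_nhds_iff.1 (inter_mem hs hdiff)
  refine .of_bound K (Metric.eventually_nhds_iff_ball.2 ⟨ε, hε, fun y hy => ?_⟩)
  have hsub : Metric.closedBall x ‖y - x‖ ⊆ s ∩ {y | DifferentiableAt ℝ Ψ y} :=
    (Metric.closedBall_subset_ball (by rwa [← dist_eq_norm])).trans hball
  have hx : x ∈ Metric.closedBall x ‖y - x‖ := Metric.mem_closedBall_self (norm_nonneg _)
  have := (convex_closedBall x ‖y - x‖).norm_image_sub_le_of_norm_hasFDerivWithin_le'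
    (C := K * ‖y - x‖) (fun z hz => (hsub hz).2.hasFDerivAt.hasFDerivWithinAt)
    (fun z hz => by
      rw [← dist_eq_norm]
      exact (hK.dist_le_mul z (hsub hz).1 x (hsub hx).1).trans
        (mul_le_mul_of_nonneg_left hz K.coe_nonneg))
    (y := y) hx (by simp [dist_eq_norm])
  simpa [dist_eq_norm, pow_two, mul_assoc] using this

theorem ContDiffAt.isBigO_comp_sub_sub_smul_fderiv {Ψ : E → F} {G : ℝ → E} {x c : E}
    (hΨ : ContDiffAt ℝ 2 Ψ x) (hG : (fun h => G h - x - h • c) =O[𝓝 0] (· ^ 2)) :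
    (fun h => Ψ (G h) - Ψ x - h • fderiv ℝ Ψ x c) =O[𝓝 0] (· ^ 2) := by
  have hGx : (fun h => G h - x) =O[𝓝 0] fun h => h := by
    have hc : (fun h : ℝ => h • c) =O[𝓝 0] fun h => h :=
      .of_bound ‖c‖ (.of_forall fun h => (norm_smul h c).trans_le (by simp [mul_comm]))
    simpa using (hG.trans_isLittleO (isLittleO_pow_id one_lt_two)).isBigO.add hc
  have hGt : Tendsto G (𝓝 0) (𝓝 x) := by
    simpa using (hGx.trans_tendsto tendsto_id).add_const x
  have hquad : (fun h => Ψ (G h) - Ψ x - fderiv ℝ Ψ x (G h - x)) =O[𝓝 0] (· ^ 2) :=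
    (hΨ.isBigO_sub_sub_fderiv.comp_tendsto hGt).trans (hGx.norm_left.pow 2)
  have hlin : (fun h => fderiv ℝ Ψ x (G h - x - h • c)) =O[𝓝 0] (· ^ 2) :=
    ((fderiv ℝ Ψ x).isBigO_comp _ _).trans hG
  refine (hquad.add hlin).congr_left fun h => ?_
  simp only [map_sub, map_smul]
  abel

theorem hasDerivAt_sq_div_two_smul (m : E) (t : ℝ) :
    HasDerivAt (fun s : ℝ => (s ^ 2 / 2) • m) (t • m) t := by
  convert ((hasDerivAt_pow 2 t).div_const 2).smul_const m using 2
  ring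

theorem ContDiffAt.isBigO_odeSolution_sub_taylor {f : E → E} {u : ℝ → E} {x : E}
    (hf : ContDiffAt ℝ 2 f x) (hu0 : u 0 = x)
    (hu : ∀ᶠ t in 𝓝 0, HasDerivAt u (f (u t)) t) :
    (fun t => u t - x - t • f x - (t ^ 2 / 2) • fderiv ℝ f x (f x)) =O[𝓝 0] (· ^ 3) := by
  have hud : HasDerivAt u (f x) 0 := by simpa [hu0] using hu.self_of_nhds
  have hux : (fun t => u t - x) =O[𝓝 0] fun t => t := by simpa [hu0] using hud.isBigO_sub
  have hut : Tendsto u (𝓝 0) (𝓝 x) := hu0 ▸ hud.continuousAt.tendsto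
  have hfu : (fun t => f (u t) - f x) =O[𝓝 0] fun t => t :=
    ((hf.differentiableAt (by simp)).isBigO_sub.comp_tendsto hut).trans hux
  have hfirst : (fun t => u t - x - t • f x) =O[𝓝 0] (· ^ 2) := by
    refine isBigO_pow_succ_of_hasDerivAt (by simp [hu0]) ?_ (by simpa using hfu)
    filter_upwards [hu] with t ht
    convert (ht.sub_const x).sub ((hasDerivAt_id t).smul_const (f x)) using 1 <;>
      first | rfl | simp
  refine isBigO_pow_succ_of_hasDerivAt (by simp [hu0]) ?_
    (hf.isBigO_comp_sub_sub_smul_fderiv hfirst)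
  filter_upwards [hu] with t ht
  convert ((ht.sub_const x).sub ((hasDerivAt_id t).smul_const (f x))).sub
    (hasDerivAt_sq_div_two_smul (fderiv ℝ f x (f x)) t) using 1 <;> first | rfl | simp

theorem ContDiffAt.isBigO_implicitStep_sub_taylor {Ψ : E → E} {G : ℝ → E} {x c : E}
    (hΨ : ContDiffAt ℝ 2 Ψ x) (hΨx : Ψ x = c + c)
    (hG : ∀ᶠ h in 𝓝 0, G h - x = (h / 2) • Ψ (G h)) (hG0 : G 0 = x)
    (hGd : HasDerivAt G c 0) :
    (fun h => G h - x - h • c - (h ^ 2 / 2) • fderiv ℝ Ψ x c) =O[𝓝 0] (· ^ 3) := by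
  have hGx : (fun h => G h - x) =O[𝓝 0] fun h => h := by simpa [hG0] using hGd.isBigO_sub
  have hGt : Tendsto G (𝓝 0) (𝓝 x) := hG0 ▸ hGd.continuousAt.tendsto
  have hΨG : (fun h => Ψ (G h) - Ψ x) =O[𝓝 0] (· ^ 1) := by
    simpa using! ((hΨ.differentiableAt (by simp)).isBigO_sub.comp_tendsto hGt).trans hGx
  have hfirst : (fun h => G h - x - h • c) =O[𝓝 0] (· ^ 2) := by
    refine hΨG.div_two_smul.congr' ?_ .rfl
    filter_upwards [hG] with h hh
    rw [hh, hΨx]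
    module
  refine (hΨ.isBigO_comp_sub_sub_smul_fderiv hfirst).div_two_smul.congr' ?_ .rfl
  filter_upwards [hG] with h hh
  rw [hh, hΨx]
  module

theorem fderiv_add_swap_eq_fderiv_diag {φ : E × E → F} {x : E}
    (hφ : DifferentiableAt ℝ φ (x, x)) :
    fderiv ℝ (fun y => φ (y, x) + φ (x, y)) x = fderiv ℝ (fun y => φ (y, y)) x := by
  have hdiag : HasFDerivAt (fun y => φ (y, y)) _ x :=
    hφ.hasFDerivAt.comp (f := fun y => (y, y)) x
      ((hasFDerivAt_id x).prodMk (hasFDerivAt_id x))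
  have hsum : HasFDerivAt (fun y => φ (y, x) + φ (x, y)) _ x :=
    (hφ.hasFDerivAt.comp (f := fun y => (y, x)) x
      ((hasFDerivAt_id x).prodMk (hasFDerivAt_const x x))).add
    (hφ.hasFDerivAt.comp (f := fun y => (x, y)) x
      ((hasFDerivAt_const x x).prodMk (hasFDerivAt_id x)))
  rw [hsum.fderiv, hdiag.fderiv]
  ext v
  simp [← map_add]

/-- Second-order accuracy of the NSFD scheme: the local truncation error
`E(h) = u(h) - F(h,x)` satisfies `E(h) = O(h³)` as `h → 0`. -/
theorem nsfd_second_order {n : ℕ}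
    (φ : (EuclideanSpace ℝ (Fin n) × EuclideanSpace ℝ (Fin n)) → EuclideanSpace ℝ (Fin n))
    (hφ : ContDiff ℝ 2 φ) (x : EuclideanSpace ℝ (Fin n))
    (u : ℝ → EuclideanSpace ℝ (Fin n)) (hu0 : u 0 = x)
    (hu : ∀ᶠ t in nhds (0 : ℝ), HasDerivAt u (φ (u t, u t)) t)
    (F : ℝ → EuclideanSpace ℝ (Fin n) → EuclideanSpace ℝ (Fin n))
    (hscheme : ∀ᶠ h in nhds (0 : ℝ),
      F h x - x = (h / 2) • (φ (F h x, x) + φ (x, F h x)))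
    (hF0 : F 0 x = x)
    (hFd : HasDerivAt (fun h : ℝ => F h x) (φ (x, x)) 0) :
    (fun h : ℝ => u h - F h x) =O[nhds 0] fun h : ℝ => h ^ 3 := by
  have hf : ContDiffAt ℝ 2 (fun y => φ (y, y)) x :=
    (hφ.comp (contDiff_id.prodMk contDiff_id)).contDiffAt
  have hΨ : ContDiffAt ℝ 2 (fun y => φ (y, x) + φ (x, y)) x :=
    ((hφ.comp (contDiff_id.prodMk contDiff_const)).add
      (hφ.comp (contDiff_const.prodMk contDiff_id))).contDiffAt
  have hexact := hf.isBigO_odeSolution_sub_taylor hu0 hu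
  have hnsfd := hΨ.isBigO_implicitStep_sub_taylor rfl hscheme hF0 hFd
  rw [fderiv_add_swap_eq_fderiv_diag (hφ.differentiable two_ne_zero _)] at hnsfd
  refine (hexact.sub hnsfd).congr_left fun h => ?_
  abel
end

section
/- Let F : ℝ × ℝⁿ → ℝⁿ be continuous with F(0,x) = x for all x, let h̄ > 0, and suppose F is reversible for all h ∈ (0, h̄], i.e. F(−h, F(h,x)) = x for all x ∈ ℝⁿ and h ∈ (0, h̄]. Let D ⊆ ℝⁿ be a closed set satisfying D = closure(interior D). If for every h ∈ (0, h̄] the image F(−h, ·) of the boundary ∂D does not meet the interior of D, i.e. F(−h, ∂D) ∩ interior(D) = ∅, then D is invariant under F(h, ·) for every h ∈ (0, h̄): x ∈ D implies F(h,x) ∈ D. -/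
/-
If `F(h, x) ∉ D` for some `x ∈ interior D`, the continuous curve `t ↦ F(t, x)` starts in the
interior of `D` at `t = 0` and leaves `D` by time `h`, so it crosses `∂D` at some `t ∈ (0, h]`.
Reversibility then puts `x = F(-t, F(t, x))` in `F(-t, ∂D) ∩ interior D`, which is empty. Hence
each `F(h, ·)` maps `interior D` into `D`, and by continuity it maps `closure (interior D) = D`
into `closure D = D`.
-/

open Set

theorem exists_mem_Ioc_frontier_of_mem_interior_of_notMem {X : Type*} [TopologicalSpace X]
    {γ : ℝ → X} {D : Set X} {a b : ℝ} (hγ : ContinuousOn γ (Icc a b)) (hab : a ≤ b)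
    (ha : γ a ∈ interior D) (hb : γ b ∉ D) : ∃ t ∈ Ioc a b, γ t ∈ frontier D := by
  have : PreconnectedSpace (Icc a b) := Subtype.preconnectedSpace isPreconnected_Icc
  set s : Set (Icc a b) := (Icc a b).domRestrict γ ⁻¹' D
  have hs : s.Nonempty ∧ s ≠ univ :=
    ⟨⟨⟨a, left_mem_Icc.2 hab⟩, (interior_subset ha : γ a ∈ D)⟩,
      fun hsu => hb (eq_univ_iff_forall.1 hsu ⟨b, right_mem_Icc.2 hab⟩)⟩
  obtain ⟨t, ht⟩ := nonempty_frontier_iff.2 hs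
  have hγt : γ t ∈ frontier D := hγ.domRestrict.frontier_preimage_subset D ht
  have hta : (t : ℝ) ≠ a := fun hta => disjoint_interior_frontier.ne_of_mem ha hγt (by rw [hta])
  exact ⟨t, ⟨lt_of_le_of_ne t.2.1 hta.symm, t.2.2⟩, hγt⟩

theorem mapsTo_interior_of_reversible {X : Type*} [TopologicalSpace X] {F : ℝ → X → X}
    (hF : ∀ x, Continuous fun t => F t x) (hF0 : ∀ x, F 0 x = x) {hbar : ℝ}
    (hrev : ∀ h ∈ Ioc (0 : ℝ) hbar, ∀ x, F (-h) (F h x) = x) {D : Set X}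
    (hcond : ∀ h ∈ Ioc (0 : ℝ) hbar, F (-h) '' frontier D ∩ interior D = ∅)
    {h : ℝ} (hh : h ∈ Ioc (0 : ℝ) hbar) : MapsTo (F h) (interior D) D := by
  intro x hx
  by_contra hFx
  obtain ⟨t, ht, htD⟩ := exists_mem_Ioc_frontier_of_mem_interior_of_notMem
    (hF x).continuousOn hh.1.le (by rwa [hF0]) hFx
  have htbar : t ∈ Ioc (0 : ℝ) hbar := ⟨ht.1, ht.2.trans hh.2⟩
  have hx' : x ∈ F (-t) '' frontier D ∩ interior D := ⟨⟨F t x, htD, hrev t htbar x⟩, hx⟩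
  simp [hcond t htbar] at hx'

theorem reversible_scheme_invariance_general {n : ℕ}
    (F : ℝ → EuclideanSpace ℝ (Fin n) → EuclideanSpace ℝ (Fin n))
    (hFcont : Continuous fun p : ℝ × EuclideanSpace ℝ (Fin n) => F p.1 p.2)
    (hF0 : ∀ x, F 0 x = x)
    (hbar : ℝ)
    (hrev : ∀ h ∈ Set.Ioc (0 : ℝ) hbar, ∀ x, F (-h) (F h x) = x)
    (D : Set (EuclideanSpace ℝ (Fin n)))
    (hD : D = closure (interior D))
    (hcond : ∀ h ∈ Set.Ioc (0 : ℝ) hbar, F (-h) '' frontier D ∩ interior D = ∅) :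
    ∀ h ∈ Set.Ioo (0 : ℝ) hbar, ∀ x ∈ D, F h x ∈ D := by
  intro h hh
  have hcurve : ∀ x, Continuous fun t => F t x := fun x => by fun_prop
  have hinterior : MapsTo (F h) (interior D) D :=
    mapsTo_interior_of_reversible hcurve hF0 hrev hcond (Ioo_subset_Ioc_self hh)
  have hclosure := hinterior.closure (show Continuous (F h) by fun_prop)
  have hDclosed : IsClosed D := hD ▸ isClosed_closure
  rwa [← hD, hDclosed.closure_eq] at hclosure

/-- Domain invariance for reversible schemes:  if `F(-h, ∂D)` does not meet the
interior of the closed set `D = closure (interior D)` for any `h ∈ (0, h̄]`,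
then `D` is invariant under `F(h,·)` for every `h ∈ (0, h̄)`. -/
theorem reversible_scheme_invariance {n : ℕ}
    (F : ℝ → EuclideanSpace ℝ (Fin n) → EuclideanSpace ℝ (Fin n))
    (hFcont : Continuous fun p : ℝ × EuclideanSpace ℝ (Fin n) => F p.1 p.2)
    (hF0 : ∀ x, F 0 x = x)
    (hbar : ℝ) (hbarpos : 0 < hbar)
    (hrev : ∀ h ∈ Set.Ioc (0 : ℝ) hbar, ∀ x, F (-h) (F h x) = x)
    (D : Set (EuclideanSpace ℝ (Fin n))) (hDclosed : IsClosed D)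
    (hD : D = closure (interior D))
    (hcond : ∀ h ∈ Set.Ioc (0 : ℝ) hbar, F (-h) '' frontier D ∩ interior D = ∅) :
    ∀ h ∈ Set.Ioo (0 : ℝ) hbar, ∀ x ∈ D, F h x ∈ D :=
  reversible_scheme_invariance_general F hFcont hF0 hbar hrev D hD hcond
end

section
/- Let F : ℝ × ℝⁿ → ℝⁿ be continuous with F(0,x) = x for all x, let h̄ > 0, and suppose F is reversible for all h ∈ (0, h̄], i.e. F(−h, F(h,x)) = x for all x and all h ∈ (0, h̄]. Let D ⊆ ℝⁿ be a nonempty closed convex set satisfying D = closure(interior D). Suppose that for every h ∈ (0, h̄], every x ∈ ∂D, and every outer normal vector n to D at x (i.e., every n such that the open ball of center x + n and radius ‖n‖ misses interior(D)), one has ⟨n, F(−h,x) − x⟩ ≥ 0. Then D is invariant under F(h, ·) for every h ∈ (0, h̄): x ∈ D implies F(h,x) ∈ D. -/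
/-! If `F(h, x) ∉ D` for some `x ∈ D`, density of the interior lets us start from an interior point
`x₀`, and the curve `t ↦ F(t, x₀)` then crosses `∂D` at some `z = F(t, x₀)` with `0 < t < h`. A
hyperplane separating `z` from the open convex set `interior D` gives an outer normal `ν` at `z`
with `⟪ν, x₀ - z⟫ < 0`; but reversibility gives `F(-t, z) = x₀`, so the tangent condition says
`⟪ν, x₀ - z⟫ ≥ 0`. -/

open Set Metric

theorem exists_mem_Ioo_mem_frontier {X : Type*} [TopologicalSpace X] {g : ℝ → X} {D : Set X}
    {a b : ℝ} (hab : a ≤ b) (hg : ContinuousOn g (Icc a b)) (hD : IsClosed D)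
    (ha : g a ∈ interior D) (hb : g b ∉ D) : ∃ t ∈ Ioo a b, g t ∈ frontier D := by
  obtain ⟨t, ⟨hta, htb⟩, htD⟩ : ∃ t ∈ Icc a b, g t ∈ frontier D := by
    by_contra! hmiss
    have hcover : g '' Icc a b ⊆ interior D ∪ Dᶜ := by
      rintro _ ⟨t, ht, rfl⟩
      by_cases htD : g t ∈ D
      · exact Or.inl (by_contra fun hti => hmiss t ht (hD.frontier_eq ▸ ⟨htD, hti⟩))
      · exact Or.inr htD
    have hsub := (isPreconnected_Icc.image g hg).subset_left_of_subset_union isOpen_interior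
      hD.isOpen_compl (disjoint_compl_right.mono_left interior_subset) hcover
      ⟨g a, mem_image_of_mem g (left_mem_Icc.2 hab), ha⟩
    exact hb (interior_subset (hsub (mem_image_of_mem g (right_mem_Icc.2 hab))))
  refine ⟨t, ⟨hta.lt_of_ne ?_, htb.lt_of_ne ?_⟩, htD⟩
  · rintro rfl
    exact htD.2 ha
  · rintro rfl
    exact hb (hD.frontier_subset htD)

section InnerProductSpace

variable {E : Type*} [NormedAddCommGroup E] [InnerProductSpace ℝ E]

theorem notMem_ball_add_of_inner_nonpos {x u ν : E} (h : inner ℝ ν (u - x) ≤ 0) :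
    u ∉ ball (x + ν) ‖ν‖ := by
  rw [mem_ball, dist_eq_norm, not_lt, show u - (x + ν) = (u - x) - ν by abel]
  refine le_of_pow_le_pow_left₀ two_ne_zero (norm_nonneg _) ?_
  rw [norm_sub_sq_real, real_inner_comm]
  nlinarith [sq_nonneg ‖u - x‖]

theorem Convex.exists_inner_sub_neg_of_notMem_interior [CompleteSpace E] {D : Set E}
    (hD : Convex ℝ D) {z : E} (hz : z ∉ interior D) :
    ∃ ν : E, ∀ u ∈ interior D, inner ℝ ν (u - z) < 0 := by
  obtain ⟨f, hf⟩ := geometric_hahn_banach_open_point hD.interior isOpen_interior hz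
  refine ⟨(InnerProductSpace.toDual ℝ E).symm f, fun u hu => ?_⟩
  rw [InnerProductSpace.toDual_symm_apply, map_sub, sub_neg]
  exact hf u hu

end InnerProductSpace

theorem reversible_scheme_tangent_invariance_general {n : ℕ}
    (F : ℝ → EuclideanSpace ℝ (Fin n) → EuclideanSpace ℝ (Fin n))
    (hFcont : Continuous fun p : ℝ × EuclideanSpace ℝ (Fin n) => F p.1 p.2)
    (hF0 : ∀ x, F 0 x = x)
    (hbar : ℝ)
    (hrev : ∀ h ∈ Set.Ioc (0 : ℝ) hbar, ∀ x, F (-h) (F h x) = x)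
    (D : Set (EuclideanSpace ℝ (Fin n)))
    (hDclosed : IsClosed D) (hDconv : Convex ℝ D)
    (hD : D = closure (interior D))
    (hcond : ∀ h ∈ Set.Ioc (0 : ℝ) hbar, ∀ x ∈ frontier D,
      ∀ nv : EuclideanSpace ℝ (Fin n),
        Metric.ball (x + nv) ‖nv‖ ∩ interior D = ∅ →
          (0 : ℝ) ≤ inner ℝ nv (F (-h) x - x)) :
    ∀ h ∈ Set.Ioo (0 : ℝ) hbar, ∀ x ∈ D, F h x ∈ D := by
  intro h hh x hxD
  by_contra hx
  have hFh : Continuous (F h) := hFcont.comp (continuous_const.prodMk continuous_id)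
  have hcurve (y) : Continuous (F · y) := hFcont.comp (continuous_id.prodMk continuous_const)
  obtain ⟨x₀, hx₀, hx₀int⟩ : ({u | F h u ∉ D} ∩ interior D).Nonempty :=
    mem_closure_iff.1 (hD ▸ hxD) _ (hDclosed.isOpen_compl.preimage hFh) hx
  obtain ⟨t, ht, hz⟩ := exists_mem_Ioo_mem_frontier hh.1.le (hcurve x₀).continuousOn hDclosed
    (by rwa [hF0]) hx₀
  obtain ⟨ν, hν⟩ := hDconv.exists_inner_sub_neg_of_notMem_interior hz.2
  have hnormal : ball (F t x₀ + ν) ‖ν‖ ∩ interior D = ∅ :=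
    eq_empty_of_forall_notMem fun u hu => notMem_ball_add_of_inner_nonpos (hν u hu.2).le hu.1
  have htbar : t ∈ Ioc 0 hbar := ⟨ht.1, ht.2.le.trans hh.2.le⟩
  have htangent := hcond t htbar _ hz ν hnormal
  rw [hrev t htbar x₀] at htangent
  exact (hν x₀ hx₀int).not_ge htangent

/-- Discrete tangent condition for domain invariance of a reversible scheme:
if at every boundary point `x` of the nonempty closed convex set
`D = closure (interior D)` and every outer normal vector `nv` one has
`⟪nv, F(-h,x) - x⟫ ≥ 0` for all `h ∈ (0, h̄]`, then `D` is invariant under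
`F(h,·)` for every `h ∈ (0, h̄)`. -/
theorem reversible_scheme_tangent_invariance {n : ℕ}
    (F : ℝ → EuclideanSpace ℝ (Fin n) → EuclideanSpace ℝ (Fin n))
    (hFcont : Continuous fun p : ℝ × EuclideanSpace ℝ (Fin n) => F p.1 p.2)
    (hF0 : ∀ x, F 0 x = x)
    (hbar : ℝ) (hbarpos : 0 < hbar)
    (hrev : ∀ h ∈ Set.Ioc (0 : ℝ) hbar, ∀ x, F (-h) (F h x) = x)
    (D : Set (EuclideanSpace ℝ (Fin n))) (hDne : D.Nonempty)
    (hDclosed : IsClosed D) (hDconv : Convex ℝ D)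
    (hD : D = closure (interior D))
    (hcond : ∀ h ∈ Set.Ioc (0 : ℝ) hbar, ∀ x ∈ frontier D,
      ∀ nv : EuclideanSpace ℝ (Fin n),
        Metric.ball (x + nv) ‖nv‖ ∩ interior D = ∅ →
          (0 : ℝ) ≤ inner ℝ nv (F (-h) x - x)) :
    ∀ h ∈ Set.Ioo (0 : ℝ) hbar, ∀ x ∈ D, F h x ∈ D :=
  reversible_scheme_tangent_invariance_general F hFcont hF0 hbar hrev D hDclosed hDconv hD hcond
end

section
/- Let P, Q : ℝⁿ → M_n(ℝ), A ∈ M_n(ℝ), b ∈ ℝⁿ satisfy the two-sided representation property P(x)·y + A·(x+y) + b = Q(y)·x + A·(x+y) + b for all x, y ∈ ℝⁿ (equivalently, P(x)·y = Q(y)·x for all x, y). Let h ∈ ℝ and x ∈ ℝⁿ, suppose M(x) = I − (h/2)(P(x)+Q(x)) − h·A is invertible, and set y = M(x)⁻¹·((I + h·A)x + h·b). Suppose further that N(y) = I + (h/2)(P(y)+Q(y)) + h·A is invertible. Then N(y)⁻¹·((I − h·A)·y − h·b) = x; that is, the mass-action NSFD map satisfies F(−h, F(h,x)) = x (time-reversibility).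 -/
/-!
Writing `M(x) = I - (h/2)(P x + Q x) - hA` and `N(y) = I + (h/2)(P y + Q y) + hA`, the identity
`P(x) y = Q(y) x` gives `(P y + Q y) x = (P x + Q x) y`. Hence `N(y) x - ((I - hA) y - hb)` is the
negative of `M(x) y - ((I + hA) x + hb)`: the forward step from `x` lands at `y` exactly when the
backward step from `y` lands at `x`.
-/

open Matrix

variable {ι R : Type*} [Fintype ι] [CommRing R]

theorem Matrix.add_mulVec_comm_of_mulVec_eq {P Q : (ι → R) → Matrix ι ι R}
    (hPQ : ∀ x y, P x *ᵥ y = Q y *ᵥ x) (x y : ι → R) :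
    (P y + Q y) *ᵥ x = (P x + Q x) *ᵥ y := by
  rw [add_mulVec, add_mulVec, hPQ y x, ← hPQ x y, add_comm]

theorem Matrix.forward_step_eq_iff_backward_step_eq [DecidableEq ι]
    {P Q : (ι → R) → Matrix ι ι R} (hPQ : ∀ x y, P x *ᵥ y = Q y *ᵥ x)
    (c h : R) (A : Matrix ι ι R) (b x y : ι → R) :
    (1 - c • (P x + Q x) - h • A) *ᵥ y = (1 + h • A) *ᵥ x + h • b ↔
      (1 + c • (P y + Q y) + h • A) *ᵥ x = (1 - h • A) *ᵥ y - h • b := by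
  have hswap := add_mulVec_comm_of_mulVec_eq hPQ x y
  simp only [add_mulVec, sub_mulVec, one_mulVec, smul_mulVec] at hswap ⊢
  rw [hswap]
  constructor <;> intro hstep <;> linear_combination -hstep

theorem Matrix.mulVec_nonsing_inv_mulVec [DecidableEq ι] {M : Matrix ι ι R} (hM : IsUnit M)
    (u : ι → R) :
    M *ᵥ (M⁻¹ *ᵥ u) = u := by
  rw [mulVec_mulVec, mul_nonsing_inv M ((isUnit_iff_isUnit_det M).mp hM), one_mulVec]

/-- Time-reversibility of the mass-action NSFD map: with
`y = F(h,x) = (I - (h/2)(P(x)+Q(x)) - hA)⁻¹((I + hA)x + hb)`, one has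
`F(-h, y) = (I + (h/2)(P(y)+Q(y)) + hA)⁻¹((I - hA)y - hb) = x`,
provided `P(x)y + A(x+y) + b = Q(y)x + A(x+y) + b` for all `x, y`. -/
theorem mass_action_scheme_reversible {n : ℕ}
    (P Q : (Fin n → ℝ) → Matrix (Fin n) (Fin n) ℝ)
    (A : Matrix (Fin n) (Fin n) ℝ) (b : Fin n → ℝ)
    (hPQ : ∀ x y : Fin n → ℝ,
      (P x).mulVec y + A.mulVec (x + y) + b
        = (Q y).mulVec x + A.mulVec (x + y) + b)
    (h : ℝ) (x : Fin n → ℝ)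
    (hM : IsUnit (1 - (h / 2) • (P x + Q x) - h • A))
    (y : Fin n → ℝ)
    (hy : y = (1 - (h / 2) • (P x + Q x) - h • A)⁻¹.mulVec
      (((1 : Matrix (Fin n) (Fin n) ℝ) + h • A).mulVec x + h • b))
    (hN : IsUnit (1 + (h / 2) • (P y + Q y) + h • A)) :
    (1 + (h / 2) • (P y + Q y) + h • A)⁻¹.mulVec
      (((1 : Matrix (Fin n) (Fin n) ℝ) - h • A).mulVec y - h • b) = x := by
  have hPQ' : ∀ x y : Fin n → ℝ, P x *ᵥ y = Q y *ᵥ x :=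
    fun x y => add_right_cancel (add_right_cancel (hPQ x y))
  have hforward :
      (1 - (h / 2) • (P x + Q x) - h • A) *ᵥ y = (1 + h • A) *ᵥ x + h • b := by
    rw [hy, mulVec_nonsing_inv_mulVec hM]
  have hbackward := (forward_step_eq_iff_backward_step_eq hPQ' (h / 2) h A b x y).mp hforward
  let := hN.invertible
  exact inv_mulVec_eq_vec hbackward.symm
end
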